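/- If a connected graph G has order n, partition dimension p, and diameter s, then n ≤ p·s^(p−1). -/

import Mathlib

open SimpleGraph Finset

variable {V : Type*}

/-- A vertex `x` resolves the pair `u, v` if it is at different distances from them. -/
def IsResolvingSet (G : SimpleGraph V) (S : Set V) : Prop :=
  ∀ u v : V, u ≠ v → ∃ x ∈ S, G.dist u x ≠ G.dist v x

/-- The metric dimension: minimum cardinality of a resolving set. -/
noncomputable def metricDim (G : SimpleGraph V) [Fintype V] : ℕ :=
  sInf {n | ∃ S : Finset V, S.card = n ∧ IsResolvingSet G ↑S}

/-- `w` strongly resolves `u, v`. -/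
def StronglyResolves (G : SimpleGraph V) (w u v : V) : Prop :=
  G.dist w u = G.dist w v + G.dist v u ∨ G.dist w v = G.dist w u + G.dist u v

def IsStrongResolvingSet (G : SimpleGraph V) (S : Set V) : Prop :=
  ∀ u v : V, u ≠ v → ∃ w ∈ S, StronglyResolves G w u v

noncomputable def strongMetricDim (G : SimpleGraph V) [Fintype V] : ℕ :=
  sInf {n | ∃ S : Finset V, S.card = n ∧ IsStrongResolvingSet G ↑S}

/-- `u` is maximally distant from `v`. -/
def MaxDistant (G : SimpleGraph V) (u v : V) : Prop :=
  ∀ w : V, G.Adj u w → G.dist v w ≤ G.dist v u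

def MutuallyMaxDistant (G : SimpleGraph V) (u v : V) : Prop :=
  MaxDistant G u v ∧ MaxDistant G v u

/-- The strong resolving graph of `G`. -/
def strongResolvingGraph (G : SimpleGraph V) : SimpleGraph V where
  Adj u v := u ≠ v ∧ MutuallyMaxDistant G u v
  symm := by
    constructor
    intro u v h
    exact ⟨h.1.symm, h.2.2, h.2.1⟩
  loopless := by
    constructor
    intro u h
    exact h.1 rfl

def IsVertexCover (H : SimpleGraph V) (S : Set V) : Prop :=
  ∀ u v : V, H.Adj u v → u ∈ S ∨ v ∈ S

noncomputable def vertexCoverNum (H : SimpleGraph V) [Fintype V] : ℕ :=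
  sInf {n | ∃ S : Finset V, S.card = n ∧ _root_.IsVertexCover H ↑S}

def IsLocalResolvingSet (G : SimpleGraph V) (S : Set V) : Prop :=
  ∀ u v : V, G.Adj u v → ∃ x ∈ S, G.dist u x ≠ G.dist v x

noncomputable def localMetricDim (G : SimpleGraph V) [Fintype V] : ℕ :=
  sInf {n | ∃ S : Finset V, S.card = n ∧ IsLocalResolvingSet G ↑S}

def IsIndepVertexSet (G : SimpleGraph V) (S : Set V) : Prop :=
  S.Pairwise fun u v => ¬ G.Adj u v

noncomputable def indepNum (G : SimpleGraph V) [Fintype V] : ℕ :=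
  sSup {n | ∃ S : Finset V, S.card = n ∧ IsIndepVertexSet G ↑S}

def IsAdjResolvingSet (G : SimpleGraph V) (S : Set V) : Prop :=
  ∀ x y : V, x ≠ y → x ∉ S → y ∉ S →
    ∃ s ∈ S, (G.Adj s x ∧ ¬ G.Adj s y) ∨ (¬ G.Adj s x ∧ G.Adj s y)

noncomputable def adjDim (G : SimpleGraph V) [Fintype V] : ℕ :=
  sInf {n | ∃ S : Finset V, S.card = n ∧ IsAdjResolvingSet G ↑S}

def IsKResolvingSet (G : SimpleGraph V) (k : ℕ) (S : Finset V) : Prop :=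
  ∀ x y : V, x ≠ y → k ≤ (S.filter fun w => G.dist x w ≠ G.dist y w).card

noncomputable def kMetricDim (G : SimpleGraph V) [Fintype V] (k : ℕ) : ℕ :=
  sInf {n | ∃ S : Finset V, S.card = n ∧ IsKResolvingSet G k S}

def IsKMetricDimensional (G : SimpleGraph V) (k : ℕ) : Prop :=
  (∃ S : Finset V, IsKResolvingSet G k S) ∧
    ∀ j : ℕ, (∃ S : Finset V, IsKResolvingSet G j S) → j ≤ k

/-- distance from a vertex to a finite set of vertices -/
noncomputable def fsetDist (G : SimpleGraph V) (v : V) (P : Finset V) : ℕ :=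
  sInf {d | ∃ w ∈ P, G.dist v w = d}

def IsResolvingPartition [Fintype V] [DecidableEq V] (G : SimpleGraph V)
    (Pt : Finpartition (Finset.univ : Finset V)) : Prop :=
  ∀ u v : V, u ≠ v → ∃ P ∈ Pt.parts, fsetDist G u P ≠ fsetDist G v P

noncomputable def partitionDim (G : SimpleGraph V) [Fintype V] [DecidableEq V] : ℕ :=
  sInf {n | ∃ Pt : Finpartition (Finset.univ : Finset V), Pt.parts.card = n ∧ IsResolvingPartition G Pt}

def SetStronglyResolves (G : SimpleGraph V) (W : Finset V) (x y : V) : Prop :=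
  x ∉ W ∧ y ∉ W ∧
    (fsetDist G x W = G.dist x y + fsetDist G y W ∨
      fsetDist G y W = G.dist y x + fsetDist G x W)

def IsStrongResolvingPartition [Fintype V] [DecidableEq V] (G : SimpleGraph V)
    (Pt : Finpartition (Finset.univ : Finset V)) : Prop :=
  ∀ Q ∈ Pt.parts, ∀ x ∈ Q, ∀ y ∈ Q, x ≠ y →
    ∃ P ∈ Pt.parts, SetStronglyResolves G P x y

noncomputable def strongPartitionDim (G : SimpleGraph V) [Fintype V] [DecidableEq V] : ℕ :=
  sInf {n | ∃ Pt : Finpartition (Finset.univ : Finset V),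
    Pt.parts.card = n ∧ IsStrongResolvingPartition G Pt}

/-- distance from an edge (as an unordered pair) to a vertex -/
noncomputable def edgeDist (G : SimpleGraph V) (e : Sym2 V) (v : V) : ℕ :=
  Sym2.lift ⟨fun a b => min (G.dist a v) (G.dist b v), fun a b => min_comm _ _⟩ e

def IsEdgeResolvingSet (G : SimpleGraph V) (S : Set V) : Prop :=
  ∀ e ∈ G.edgeSet, ∀ f ∈ G.edgeSet, e ≠ f → ∃ x ∈ S, edgeDist G e x ≠ edgeDist G f x

noncomputable def edgeMetricDim (G : SimpleGraph V) [Fintype V] : ℕ :=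
  sInf {n | ∃ S : Finset V, S.card = n ∧ IsEdgeResolvingSet G ↑S}

noncomputable def Rset (G : SimpleGraph V) [Fintype V] (x y : V) : Finset V :=
  Finset.univ.filter fun w => G.dist x w ≠ G.dist y w

def IsResolvingFunction (G : SimpleGraph V) [Fintype V] (f : V → ℝ) : Prop :=
  (∀ v : V, 0 ≤ f v ∧ f v ≤ 1) ∧
    ∀ x y : V, x ≠ y → 1 ≤ ∑ w ∈ Rset G x y, f w

noncomputable def fracMetricDim (G : SimpleGraph V) [Fintype V] : ℝ :=
  sInf {t : ℝ | ∃ f : V → ℝ, IsResolvingFunction G f ∧ t = ∑ v, f v}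

def AreTwins (G : SimpleGraph V) (u v : V) : Prop :=
  u ≠ v ∧ (G.neighborSet u = G.neighborSet v ∨
    insert u (G.neighborSet u) = insert v (G.neighborSet v))

noncomputable def graphDiam (G : SimpleGraph V) : ℕ :=
  sSup (Set.range fun p : V × V => G.dist p.1 p.2)


/-!
A resolving partition `Π` with `p` parts embeds the vertices, through their representations, into
the vectors indexed by the parts that vanish exactly at the vertex's own part and take values in
`[1, s]` elsewhere (connectedness makes the distance to a part not containing `v` positive).
There are `p · s ^ (p - 1)` such vectors.
-/

theorem Fintype.card_le_mul_pow_of_injective_of_exists_zero {α ι : Type*}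
    [Fintype α] [Fintype ι] {f : α → ι → ℕ} (hf : Function.Injective f) {s : ℕ}
    (hfs : ∀ a, ∃ i, f a i = 0 ∧ ∀ j ≠ i, f a j ∈ Set.Icc 1 s) :
    Fintype.card α ≤ Fintype.card ι * s ^ (Fintype.card ι - 1) := by
  classical
  choose zeroAt hzero hrange using hfs
  let code : α → Σ i : ι, ({j // j ≠ i} → Set.Icc 1 s) :=
    fun a => ⟨zeroAt a, fun j => ⟨f a j, hrange a j j.2⟩⟩
  let decode : (Σ i : ι, ({j // j ≠ i} → Set.Icc 1 s)) → ι → ℕ :=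
    fun c j => if h : j = c.1 then 0 else c.2 ⟨j, h⟩
  have hdecode : decode ∘ code = f := by
    funext a j
    by_cases hj : j = zeroAt a
    · simp [decode, code, hj, hzero]
    · simp [decode, code, hj]
  calc Fintype.card α ≤ Fintype.card (Σ i : ι, ({j // j ≠ i} → Set.Icc 1 s)) :=
        Fintype.card_le_of_injective code (hdecode ▸ hf).of_comp
    _ = Fintype.card ι * s ^ (Fintype.card ι - 1) := by
        simp [Fintype.card_sigma, Fintype.card_subtype_compl]

namespace SimpleGraph

variable {G : SimpleGraph V}

lemma dist_le_graphDiam [Finite V] (u v : V) : G.dist u v ≤ graphDiam G :=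
  le_csSup (Set.finite_range _).bddAbove ⟨(u, v), rfl⟩

lemma fsetDist_eq_zero_of_mem {v : V} {P : Finset V} (hv : v ∈ P) : fsetDist G v P = 0 :=
  Nat.eq_zero_of_le_zero (Nat.sInf_le ⟨v, hv, dist_self⟩)

lemma exists_mem_dist_eq_fsetDist {v : V} {P : Finset V} (hP : P.Nonempty) :
    ∃ w ∈ P, G.dist v w = fsetDist G v P :=
  Nat.sInf_mem (s := {d | ∃ w ∈ P, G.dist v w = d}) (hP.elim fun w hw => ⟨_, w, hw, rfl⟩)

lemma Connected.one_le_fsetDist (hG : G.Connected) {v : V} {P : Finset V} (hP : P.Nonempty)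
    (hv : v ∉ P) : 1 ≤ fsetDist G v P := by
  obtain ⟨w, hw, hdist⟩ := exists_mem_dist_eq_fsetDist (G := G) (v := v) hP
  rw [← hdist]
  exact hG.pos_dist_of_ne fun hvw => hv (hvw ▸ hw)

lemma fsetDist_le_graphDiam [Finite V] {v : V} {P : Finset V} (hP : P.Nonempty) :
    fsetDist G v P ≤ graphDiam G := by
  obtain ⟨w, hw, hdist⟩ := exists_mem_dist_eq_fsetDist (G := G) (v := v) hP
  exact hdist ▸ dist_le_graphDiam v w

variable [Fintype V] [DecidableEq V]

lemma Connected.isResolvingPartition_bot (hG : G.Connected) :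
    IsResolvingPartition G (⊥ : Finpartition (Finset.univ : Finset V)) := by
  intro u v huv
  refine ⟨{u}, Finpartition.mem_bot_iff.2 ⟨u, mem_univ u, rfl⟩, ?_⟩
  rw [fsetDist_eq_zero_of_mem (mem_singleton_self u)]
  exact Nat.ne_of_lt (hG.one_le_fsetDist (singleton_nonempty u) (by simpa using huv.symm))

lemma Connected.exists_isResolvingPartition_card_eq_partitionDim (hG : G.Connected) :
    ∃ Pt : Finpartition (Finset.univ : Finset V),
      #Pt.parts = partitionDim G ∧ IsResolvingPartition G Pt :=
  Nat.sInf_mem (s := {n | ∃ Pt : Finpartition (Finset.univ : Finset V),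
    #Pt.parts = n ∧ IsResolvingPartition G Pt}) ⟨_, ⊥, rfl, hG.isResolvingPartition_bot⟩

end SimpleGraph

theorem IsResolvingPartition.card_le [Fintype V] [DecidableEq V] {G : SimpleGraph V}
    (hG : G.Connected) {Pt : Finpartition (Finset.univ : Finset V)}
    (hPt : IsResolvingPartition G Pt) :
    Fintype.card V ≤ #Pt.parts * graphDiam G ^ (#Pt.parts - 1) := by
  rw [← Fintype.card_coe Pt.parts]
  refine Fintype.card_le_mul_pow_of_injective_of_exists_zero
    (f := fun v (P : Pt.parts) => fsetDist G v P) ?_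
    fun v => ⟨⟨Pt.part v, Pt.part_mem.2 (mem_univ v)⟩, ?_, ?_⟩
  · intro u v huv
    by_contra hne
    obtain ⟨P, hP, hdist⟩ := hPt u v hne
    exact hdist (congrFun huv ⟨P, hP⟩)
  · exact fsetDist_eq_zero_of_mem (Pt.mem_part (mem_univ v))
  · rintro ⟨P, hP⟩ hne
    have hv : v ∉ P := fun hv => hne (Subtype.ext (Pt.part_eq_of_mem hP hv).symm)
    exact ⟨hG.one_le_fsetDist (Pt.nonempty_of_mem_parts hP) hv,
      fsetDist_le_graphDiam (Pt.nonempty_of_mem_parts hP)⟩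

theorem stmt16 [Fintype V] [DecidableEq V] (G : SimpleGraph V) (hG : G.Connected) :
    Fintype.card V ≤ partitionDim G * graphDiam G ^ (partitionDim G - 1) := by
  obtain ⟨Pt, hcard, hPt⟩ := hG.exists_isResolvingPartition_card_eq_partitionDim
  exact hcard ▸ hPt.card_le hG
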